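/- Suppose a + b = c + d and n ≥ 2. Then for every integer m with 1 ≤ m ≤ n − 1, the power sums satisfy the recursive formula Σ_{i=1}^{2^n} x_i^m = 2 · Σ_{i=1}^{2^{n-1}} x_i^m + Σ_{t=1}^{m-1} binom(m, t) · k_n^t · Σ_{i=1}^{2^{n-1}} x_i^{m-t} + 2^{n-1} · k_n^m, where the first 2^{n-1} entries of x^{(n)} are the entries of x^{(n-1)}. -/

import Mathlib

/-- The pair of sequences `(x^{(t+1)}, y^{(t+1)})` of length `2^(t+1)` (0-based internal
level `t` corresponds to the paper's level `m = t + 1`).  `(seqXY a b c d k t i).1` is the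
`i`-th entry (0-based) of `x^{(t+1)}` and `.2` that of `y^{(t+1)}`. -/
noncomputable def seqXY (a b c d : ℝ) (k : ℕ → ℝ) : ℕ → ℕ → ℝ × ℝ
  | 0, i => if i = 0 then (a + k 1, c + k 1) else (b + k 1, d + k 1)
  | t + 1, i =>
      if i < 2 ^ (t + 1) then seqXY a b c d k t i
      else ((seqXY a b c d k t (i - 2 ^ (t + 1))).2 + k (t + 2),
            (seqXY a b c d k t (i - 2 ^ (t + 1))).1 + k (t + 2))

/-- `X a b c d k n i` is the entry `x_{i+1}` of the sequence `x^{(n)}` (for `n ≥ 1`,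
`0 ≤ i < 2^n`). -/
noncomputable def X (a b c d : ℝ) (k : ℕ → ℝ) (n i : ℕ) : ℝ :=
  (seqXY a b c d k (n - 1) i).1

/-- `Y a b c d k n i` is the entry `y_{i+1}` of the sequence `y^{(n)}` (for `n ≥ 1`,
`0 ≤ i < 2^n`). -/
noncomputable def Y (a b c d : ℝ) (k : ℕ → ℝ) (n i : ℕ) : ℝ :=
  (seqXY a b c d k (n - 1) i).2


/-!
Passing from level `t` to level `t + 1` appends the shifted other sequence, so by the binomial
theorem the `j`-th power sum of each new sequence is its old `j`-th power sum plus a combination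
of the lower power sums of the other sequence. Hence, by induction, `x^{(t)}` and `y^{(t)}` have
the same power sums up to degree `t` (the base case is `a + b = c + d`), and expanding
`Σ x_i^m = Σ_{i ≤ 2^{n-1}} x_i^m + Σ_{i ≤ 2^{n-1}} (y_i + k_n)^m` while replacing the
power sums of `y^{(n-1)}` by those of `x^{(n-1)}` gives the recursion.
-/

open Finset

theorem sum_add_const_pow {ι R : Type*} [CommSemiring R] (s : Finset ι) (z : ι → R) (K : R)
    (m : ℕ) :
    ∑ i ∈ s, (z i + K) ^ m =
      ∑ j ∈ range (m + 1), (m.choose j : R) * K ^ j * ∑ i ∈ s, z i ^ (m - j) := by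
  simp_rw [add_comm _ K, add_pow, mul_sum]
  rw [sum_comm]
  exact sum_congr rfl fun j _ => sum_congr rfl fun i _ => by ring

theorem sum_add_const_pow_sub_sum_pow_eq {ι R : Type*} [CommRing R] {s : Finset ι}
    {z w : ι → R} {m : ℕ} (h : ∀ j < m, ∑ i ∈ s, z i ^ j = ∑ i ∈ s, w i ^ j) (K : R) :
    ∑ i ∈ s, (z i + K) ^ m - ∑ i ∈ s, z i ^ m =
      ∑ i ∈ s, (w i + K) ^ m - ∑ i ∈ s, w i ^ m := by
  simp only [sum_add_const_pow, sum_range_succ', Nat.choose_zero_right, Nat.cast_one, pow_zero,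
    one_mul, Nat.sub_zero, add_sub_cancel_right]
  exact sum_congr rfl fun j hj => by rw [h _ (by simp at hj; omega)]

section

variable (a b c d : ℝ) (k : ℕ → ℝ)

theorem sum_range_seqXY_succ (t : ℕ) (f : ℝ × ℝ → ℝ) :
    ∑ i ∈ range (2 ^ (t + 2)), f (seqXY a b c d k (t + 1) i) =
      ∑ i ∈ range (2 ^ (t + 1)), f (seqXY a b c d k t i) +
      ∑ i ∈ range (2 ^ (t + 1)),
        f ((seqXY a b c d k t i).2 + k (t + 2), (seqXY a b c d k t i).1 + k (t + 2)) := by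
  rw [pow_succ, mul_two, sum_range_add]
  congr 1
  · exact sum_congr rfl fun i hi => by simp [seqXY, mem_range.mp hi]
  · exact sum_congr rfl fun i _ => by simp [seqXY]

variable {a b c d}

theorem sum_seqXY_fst_pow_eq_sum_snd_pow (h : a + b = c + d) {t j : ℕ} (hj : j ≤ t + 1) :
    ∑ i ∈ range (2 ^ (t + 1)), (seqXY a b c d k t i).1 ^ j =
      ∑ i ∈ range (2 ^ (t + 1)), (seqXY a b c d k t i).2 ^ j := by
  induction t generalizing j with
  | zero =>
    interval_cases j
    · simp
    · simp [sum_range_succ, seqXY]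
      linarith
  | succ t ih =>
    rw [sum_range_seqXY_succ a b c d k t (·.1 ^ j), sum_range_seqXY_succ a b c d k t (·.2 ^ j)]
    have := sum_add_const_pow_sub_sum_pow_eq (s := range (2 ^ (t + 1))) (m := j)
      (z := fun i => (seqXY a b c d k t i).2) (w := fun i => (seqXY a b c d k t i).1)
      (fun j' hj' => (ih (by omega)).symm) (k (t + 2))
    linarith

end

theorem power_sum_recursion (a b c d : ℝ) (h : a + b = c + d)
    (n : ℕ) (hn : 2 ≤ n) (k : ℕ → ℝ) (m : ℕ) (hm1 : 1 ≤ m) (hmn : m ≤ n - 1) :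
    ∑ i ∈ Finset.range (2 ^ n), X a b c d k n i ^ m =
      2 * ∑ i ∈ Finset.range (2 ^ (n - 1)), X a b c d k (n - 1) i ^ m +
        ∑ t ∈ Finset.Ico 1 m, (m.choose t : ℝ) * k n ^ t *
          ∑ i ∈ Finset.range (2 ^ (n - 1)), X a b c d k (n - 1) i ^ (m - t) +
        2 ^ (n - 1) * k n ^ m := by
  obtain ⟨t, rfl⟩ : ∃ t, n = t + 2 := ⟨n - 2, by omega⟩
  have hsnd : ∀ j ≤ m, ∑ i ∈ range (2 ^ (t + 1)), (seqXY a b c d k t i).2 ^ j =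
      ∑ i ∈ range (2 ^ (t + 1)), (seqXY a b c d k t i).1 ^ j := fun j hj =>
    (sum_seqXY_fst_pow_eq_sum_snd_pow k h (by omega)).symm
  simp only [X, show t + 2 - 1 = t + 1 from rfl, show t + 1 - 1 = t from rfl]
  rw [sum_range_seqXY_succ a b c d k t (·.1 ^ m), sum_add_const_pow, sum_range_succ,
    sum_range_eq_add_Ico _ (by omega : 0 < m)]
  simp_rw [fun j => hsnd (m - j) (Nat.sub_le m j)]
  simp only [Nat.choose_zero_right, Nat.choose_self, Nat.cast_one, pow_zero, Nat.sub_zero,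
    Nat.sub_self, one_mul, mul_one, sum_const, card_range, nsmul_eq_mul]
  push_cast
  ring
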